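/- arXiv:2311.08739 — 3 statements merged into one kernel-verified Lean document; each statement's English description precedes it below -/
import Mathlib

section
/- Let a > 0, n ≥ 2, and consider the signed interaction sum S = Σ_{k=i}^{j−1} b_j b_k f(x_j − x_k) with b_k = (−1)^k, f(x) = sgn(x)·|x|^{−a}, x₁ < ⋯ < x_n, and i < j with b_i = b_j (so j − i is even). Then S = Σ_{ℓ=0}^{(j−i)/2 − 1} h(x_j − x_{i+2ℓ+1}; x_{i+2ℓ+1} − x_{i+2ℓ}) where h(r; ρ) = f(ρ + r) − f(r), and consequently S ≤ f'(x_j − x_i)·Σ_{ℓ=0}^{(j−i)/2−1}(x_{i+2ℓ+1} − x_{i+2ℓ}). -/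
private lemma pair_sum (F : ℕ → ℝ) (i : ℕ) : ∀ m : ℕ,
    ∑ k ∈ Finset.Ico i (i + 2*m), F k
      = ∑ ℓ ∈ Finset.range m, (F (i+2*ℓ) + F (i+2*ℓ+1)) := by
  intro m
  induction m with
  | zero => simp
  | succ m ih =>
    have h1 : i + 2*(m+1) = (i + 2*m + 1) + 1 := by ring
    rw [h1, Finset.sum_Ico_succ_top (by omega), Finset.sum_Ico_succ_top (by omega), ih,
      Finset.sum_range_succ]
    ring

private lemma f_eq_rpow (a : ℝ) (f : ℝ → ℝ) (hf : ∀ x, f x = Real.sign x * |x| ^ (-a))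
    {t : ℝ} (ht : 0 < t) : f t = t ^ (-a) := by
  rw [hf, Real.sign_of_pos ht, abs_of_pos ht, one_mul]

private lemma deriv_f (a : ℝ) (f : ℝ → ℝ) (hf : ∀ x, f x = Real.sign x * |x| ^ (-a))
    {t : ℝ} (ht : 0 < t) : deriv f t = -a * t ^ (-a - 1) := by
  have hev : f =ᶠ[nhds t] (fun x : ℝ => x ^ (-a)) := by
    filter_upwards [Ioi_mem_nhds ht] with y hy
    exact f_eq_rpow a f hf hy
  rw [hev.deriv_eq, Real.deriv_rpow_const t (-a)]

private lemma key_bound (a : ℝ) (ha : 0 < a) (f : ℝ → ℝ)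
    (hf : ∀ x, f x = Real.sign x * |x| ^ (-a))
    {r ρ T : ℝ} (hr : 0 < r) (hρ : 0 < ρ) (hT : ρ + r ≤ T) :
    f (ρ + r) - f r ≤ (-a * T ^ (-a - 1)) * ρ := by
  have hrr : r < ρ + r := by linarith
  have hcont : ContinuousOn (fun x : ℝ => x ^ (-a)) (Set.Icc r (ρ + r)) := by
    apply ContinuousOn.rpow_const continuousOn_id
    intro y hy
    exact Or.inl (ne_of_gt (lt_of_lt_of_le hr hy.1))
  have hderiv : ∀ c ∈ Set.Ioo r (ρ + r),
      HasDerivAt (fun x : ℝ => x ^ (-a)) (-a * c ^ (-a - 1)) c := fun c hc =>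
    Real.hasDerivAt_rpow_const (Or.inl (ne_of_gt (lt_trans hr hc.1)))
  obtain ⟨c, hc, hcd⟩ := exists_hasDerivAt_eq_slope (fun x : ℝ => x ^ (-a))
    (fun c => -a * c ^ (-a - 1)) hrr hcont hderiv
  have hc0 : 0 < c := lt_trans hr hc.1
  have hcT : c ≤ T := le_trans (le_of_lt hc.2) hT
  have heq : (ρ + r : ℝ) ^ (-a) - r ^ (-a) = (-a * c ^ (-a - 1)) * ρ := by
    have hne : ρ + r - r ≠ 0 := by linarith
    field_simp at hcd
    linarith [hcd]
  rw [f_eq_rpow a f hf (by linarith), f_eq_rpow a f hf hr, heq]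
  have hpow : T ^ (-a - 1) ≤ c ^ (-a - 1) :=
    Real.rpow_le_rpow_of_nonpos hc0 hcT (by linarith)
  nlinarith [mul_nonneg (mul_pos ha hρ).le (sub_nonneg.mpr hpow)]

theorem stmt14 (a : ℝ) (ha : 0 < a) (n i j : ℕ)
    (f : ℝ → ℝ) (hf : ∀ x, f x = Real.sign x * |x| ^ (-a))
    (b : ℕ → ℝ) (hb : ∀ k, b k = (-1)^k)
    (x : ℕ → ℝ) (hord : ∀ k l, 1 ≤ k → k < l → l ≤ n → x k < x l)
    (hi : 1 ≤ i) (hij : i < j) (hjn : j ≤ n)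
    (heven : Even (j - i)) :
    (∑ k ∈ Finset.Ico i j, b j * b k * f (x j - x k)) =
      (∑ ℓ ∈ Finset.range ((j-i)/2),
        (f ((x (i+2*ℓ+1) - x (i+2*ℓ)) + (x j - x (i+2*ℓ+1))) - f (x j - x (i+2*ℓ+1)))) ∧
    (∑ k ∈ Finset.Ico i j, b j * b k * f (x j - x k)) ≤
      deriv f (x j - x i) * ∑ ℓ ∈ Finset.range ((j-i)/2), (x (i+2*ℓ+1) - x (i+2*ℓ)) := by
  obtain ⟨m, hm⟩ := heven
  have hjm : j = i + 2*m := by omega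
  have hm2 : (j - i)/2 = m := by omega
  have heq1 : (∑ k ∈ Finset.Ico i j, b j * b k * f (x j - x k)) =
      ∑ ℓ ∈ Finset.range m, (f (x j - x (i+2*ℓ)) - f (x j - x (i+2*ℓ+1))) := by
    rw [hjm, pair_sum (fun k => b (i+2*m) * b k * f (x (i+2*m) - x k)) i m, ← hjm]
    apply Finset.sum_congr rfl
    intro ℓ _
    have h1 : b j * b (i+2*ℓ) = 1 := by
      rw [hb, hb, ← pow_add]
      exact Even.neg_one_pow ⟨i + m + ℓ, by omega⟩
    have h2 : b j * b (i+2*ℓ+1) = -1 := by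
      rw [hb, hb, ← pow_add]
      exact Odd.neg_one_pow ⟨i + m + ℓ, by omega⟩
    rw [show b j * b (i+2*ℓ) * f (x j - x (i+2*ℓ)) = (b j * b (i+2*ℓ)) * f (x j - x (i+2*ℓ)) by ring,
      show b j * b (i+2*ℓ+1) * f (x j - x (i+2*ℓ+1)) = (b j * b (i+2*ℓ+1)) * f (x j - x (i+2*ℓ+1)) by ring,
      h1, h2]
    ring
  have hxi : 0 < x j - x i := sub_pos.mpr (hord i j hi hij hjn)
  constructor
  · rw [heq1, hm2]
    apply Finset.sum_congr rfl
    intro ℓ _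
    congr 2
    ring
  · rw [heq1, hm2, deriv_f a f hf hxi, Finset.mul_sum]
    apply Finset.sum_le_sum
    intro ℓ hℓ
    have hℓm : ℓ < m := Finset.mem_range.mp hℓ
    have hb1 : i + 2*ℓ + 1 < j := by omega
    have hρ : 0 < x (i+2*ℓ+1) - x (i+2*ℓ) :=
      sub_pos.mpr (hord (i+2*ℓ) (i+2*ℓ+1) (by omega) (by omega) (by omega))
    have hr : 0 < x j - x (i+2*ℓ+1) :=
      sub_pos.mpr (hord (i+2*ℓ+1) j (by omega) hb1 hjn)
    have hxle : x i ≤ x (i+2*ℓ) := by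
      rcases Nat.eq_zero_or_pos ℓ with h0 | hpos
      · simp [h0]
      · exact le_of_lt (hord i (i+2*ℓ) hi (by omega) (by omega))
    have hT : (x (i+2*ℓ+1) - x (i+2*ℓ)) + (x j - x (i+2*ℓ+1)) ≤ x j - x i := by linarith
    have harg : x j - x (i+2*ℓ) = (x (i+2*ℓ+1) - x (i+2*ℓ)) + (x j - x (i+2*ℓ+1)) := by ring
    rw [harg]
    exact key_bound a ha f hf hr hρ hT
end

section
/- Let a > 0 and b = min(1, a/2). Let r : [0, τ) → (0, ∞) be differentiable and β > 0 with ṙ(t) ≤ −b·r(t)^{−a} + 8·β^{−a} on an interval [t₀, t₁] ⊆ [0, τ), and suppose r(t₀)^a < b·β^a/16. Then ṙ(t) ≤ −b/(2 r(t)^a) for all t ∈ [t₀, t₁] such that r ≤ r(t₀) on [t₀, t], and in fact r is strictly decreasing on [t₀, t₁] while it stays positive, with r(t)^{a+1} ≤ r(t₀)^{a+1} − (b/2)(a+1)(t − t₀). -/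
/-!
As long as `r t ≤ r t₀`, monotonicity of `x ↦ x ^ a` keeps `r t ^ a` below `b β ^ a / 16`, where the
forcing term `8 β^{-a}` is at most half of the damping `b r^{-a}`; hence `ṙ ≤ -b / (2 r^a) < 0`.
So `r` can never climb back to the level `r t₀`, the bound holds on all of `[t₀, t₁]`, and
integrating `d/dt r^{a+1} = (a+1) r^a ṙ ≤ -(b/2)(a+1)` gives the power-law decay.
-/

open Set

lemma neg_mul_inv_add_eight_mul_inv_le {b x y : ℝ} (hx : 0 < x) (hy : 0 < y)
    (hxy : 16 * x < b * y) : -b * x⁻¹ + 8 * y⁻¹ ≤ -b / (2 * x) := by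
  have hgap : -b / (2 * x) - (-b * x⁻¹ + 8 * y⁻¹) = (b * y - 16 * x) / (2 * x * y) := by
    field_simp
    ring
  have : 0 ≤ (b * y - 16 * x) / (2 * x * y) := div_nonneg (by linarith) (by positivity)
  linarith

lemma le_apply_left_of_deriv_neg_of_eq {f : ℝ → ℝ} {a b : ℝ}
    (hf : ∀ x ∈ Icc a b, DifferentiableAt ℝ f x) (hneg : ∀ x ∈ Ico a b, f x = f a → deriv f x < 0) :
    ∀ x ∈ Icc a b, f x ≤ f a :=
  fun _ hx => image_le_of_deriv_right_lt_deriv_boundary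
    (fun x hx => (hf x hx).continuousAt.continuousWithinAt)
    (fun x hx => (hf x (Ico_subset_Icc_self hx)).hasDerivAt.hasDerivWithinAt) le_rfl
    (B := fun _ => f a) (fun x => hasDerivAt_const x (f a)) hneg hx

lemma rpow_add_one_le_of_deriv_le_neg_div_rpow {r : ℝ → ℝ} {a c t₀ t₁ : ℝ} (ha : -1 ≤ a)
    (hpos : ∀ t ∈ Icc t₀ t₁, 0 < r t) (hdiff : ∀ t ∈ Icc t₀ t₁, DifferentiableAt ℝ r t)
    (hd : ∀ t ∈ Ico t₀ t₁, deriv r t ≤ -c / r t ^ a) :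
    ∀ t ∈ Icc t₀ t₁, r t ^ (a + 1) ≤ r t₀ ^ (a + 1) - c * (a + 1) * (t - t₀) := by
  have hpow : ∀ t ∈ Icc t₀ t₁,
      HasDerivAt (fun s => r s ^ (a + 1)) (deriv r t * (a + 1) * r t ^ a) t := fun t ht => by
    simpa using (hdiff t ht).hasDerivAt.rpow_const (p := a + 1) (Or.inl (hpos t ht).ne')
  have hline : ∀ t, HasDerivAt (fun s => r t₀ ^ (a + 1) - c * (a + 1) * (s - t₀))
      (-(c * (a + 1))) t := fun t => by
    simpa using ((hasDerivAt_id t).sub_const t₀).const_mul (c * (a + 1)) |>.const_sub _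
  refine fun t ht => image_le_of_deriv_right_le_deriv_boundary
    (fun x hx => (hpow x hx).continuousAt.continuousWithinAt)
    (fun x hx => (hpow x (Ico_subset_Icc_self hx)).hasDerivWithinAt) (by simp)
    (fun x _ => (hline x).continuousAt.continuousWithinAt)
    (fun x _ => (hline x).hasDerivWithinAt) (fun x hx => ?_) ht
  have hra : 0 < r x ^ a := Real.rpow_pos_of_pos (hpos x (Ico_subset_Icc_self hx)) a
  calc deriv r x * (a + 1) * r x ^ a ≤ -c / r x ^ a * (a + 1) * r x ^ a := by
        gcongr
        · linarith
        · exact hd x hx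
    _ = -(c * (a + 1)) := by field_simp

theorem stmt15_general (a b β τ t₀ t₁ : ℝ) (ha : 0 < a) (hβ : 0 < β)
    (r : ℝ → ℝ)
    (hsub : Set.Icc t₀ t₁ ⊆ Set.Ico 0 τ)
    (hpos : ∀ t ∈ Set.Ico (0:ℝ) τ, 0 < r t)
    (hdiff : ∀ t ∈ Set.Ico (0:ℝ) τ, DifferentiableAt ℝ r t)
    (hd : ∀ t ∈ Set.Icc t₀ t₁, deriv r t ≤ -b * r t ^ (-a) + 8 * β ^ (-a))
    (hinit : r t₀ ^ a < b * β ^ a / 16) :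
    (∀ t ∈ Set.Icc t₀ t₁, (∀ s ∈ Set.Icc t₀ t, r s ≤ r t₀) →
      deriv r t ≤ -b / (2 * r t ^ a)) ∧
    StrictAntiOn r (Set.Icc t₀ t₁) ∧
    (∀ t ∈ Set.Icc t₀ t₁, r t ^ (a+1) ≤ r t₀ ^ (a+1) - (b/2)*(a+1)*(t - t₀)) := by
  have hrpos : ∀ t ∈ Icc t₀ t₁, 0 < r t := fun t ht => hpos t (hsub ht)
  have hrdiff : ∀ t ∈ Icc t₀ t₁, DifferentiableAt ℝ r t := fun t ht => hdiff t (hsub ht)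
  have hsmall : ∀ t ∈ Icc t₀ t₁, r t ≤ r t₀ → 16 * r t ^ a < b * β ^ a := fun t ht hle => by
    have := Real.rpow_le_rpow (hrpos t ht).le hle ha.le
    linarith
  have hslope : ∀ t ∈ Icc t₀ t₁, r t ≤ r t₀ → deriv r t ≤ -b / (2 * r t ^ a) := fun t ht hle => by
    have hdt := hd t ht
    rw [Real.rpow_neg (hrpos t ht).le, Real.rpow_neg hβ.le] at hdt
    exact hdt.trans <| neg_mul_inv_add_eight_mul_inv_le (Real.rpow_pos_of_pos (hrpos t ht) a)
      (Real.rpow_pos_of_pos hβ a) (hsmall t ht hle)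
  have hneg : ∀ t ∈ Icc t₀ t₁, r t ≤ r t₀ → deriv r t < 0 := fun t ht hle => by
    have hra := Real.rpow_pos_of_pos (hrpos t ht) a
    have hb : 0 < b :=
      pos_of_mul_pos_left (by linarith [hsmall t ht hle]) (Real.rpow_pos_of_pos hβ a).le
    exact (hslope t ht hle).trans_lt (div_neg_of_neg_of_pos (neg_neg_of_pos hb) (by positivity))
  have hbelow : ∀ t ∈ Icc t₀ t₁, r t ≤ r t₀ := le_apply_left_of_deriv_neg_of_eq hrdiff
    fun t ht heq => hneg t (Ico_subset_Icc_self ht) heq.le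
  refine ⟨fun t ht _ => hslope t ht (hbelow t ht), ?_, ?_⟩
  · refine strictAntiOn_of_deriv_neg (convex_Icc t₀ t₁)
      (fun t ht => (hrdiff t ht).continuousAt.continuousWithinAt) fun t ht => ?_
    rw [interior_Icc] at ht
    exact hneg t (Ioo_subset_Icc_self ht) (hbelow t (Ioo_subset_Icc_self ht))
  · refine rpow_add_one_le_of_deriv_le_neg_div_rpow (by linarith) hrpos hrdiff fun t ht => ?_
    have ht' := Ico_subset_Icc_self ht
    exact (hslope t ht' (hbelow t ht')).trans_eq (by ring)

theorem stmt15 (a b β τ t₀ t₁ : ℝ) (ha : 0 < a) (hb : b = min 1 (a/2)) (hβ : 0 < β)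
    (r : ℝ → ℝ)
    (hsub : Set.Icc t₀ t₁ ⊆ Set.Ico 0 τ) (ht : t₀ ≤ t₁)
    (hpos : ∀ t ∈ Set.Ico (0:ℝ) τ, 0 < r t)
    (hdiff : ∀ t ∈ Set.Ico (0:ℝ) τ, DifferentiableAt ℝ r t)
    (hd : ∀ t ∈ Set.Icc t₀ t₁, deriv r t ≤ -b * r t ^ (-a) + 8 * β ^ (-a))
    (hinit : r t₀ ^ a < b * β ^ a / 16) :
    (∀ t ∈ Set.Icc t₀ t₁, (∀ s ∈ Set.Icc t₀ t, r s ≤ r t₀) →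
      deriv r t ≤ -b / (2 * r t ^ a)) ∧
    StrictAntiOn r (Set.Icc t₀ t₁) ∧
    (∀ t ∈ Set.Icc t₀ t₁, r t ^ (a+1) ≤ r t₀ ^ (a+1) - (b/2)*(a+1)*(t - t₀)) :=
  stmt15_general a b β τ t₀ t₁ ha hβ r hsub hpos hdiff hd hinit
end

section
/- Let a > 0 and suppose r : [0, τ] → (0, ∞) is continuous on [0, τ], differentiable on (0, τ), with r(τ) ≥ 0 allowed to vanish, and suppose there are constants c, C > 0 such that r(t) ≥ c·(τ − t)^{1/(1+a)} and ṙ(t) ≥ −2 r(t)^{−a} − C and ṙ(t) ≤ −2 r(t)^{−a} + 2 s₁(t)^{−a} + 2 s₂(t)^{−a} + C for functions s₁, s₂ ≥ c·(τ−t)^{1/(1+a)}. Then there is C' > 0 with |ṙ(t)| ≤ C'·(τ − t)^{−a/(1+a)} on (0, τ), and hence r ∈ C^{1/(1+a)}([0, τ]). -/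
/-!
Since `r`, `s₁`, `s₂ ≥ c (τ - t)^{1/(1+a)}`, each of the singular terms `r^{-a}`, `s₁^{-a}`,
`s₂^{-a}` is at most `c^{-a} (τ - t)^{-a/(1+a)}`, and the constant `C` is absorbed into the same
power of `τ - t` because `τ - t ≤ τ`; the two one-sided bounds on `ṙ` then give
`|ṙ(t)| ≤ K (τ - t)^{-a/(1+a)}`. With `β = 1/(1+a)` the right-hand side is the derivative of
`g(t) = -(K/β) (τ - t)^β`, so `g ∓ r` are monotone and `|r t - r s| ≤ g t - g s`, which is at
most `(K/β) |t - s|^β` by subadditivity of `x ↦ x^β`.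
-/

open Real Set

lemma abs_sub_le_sub_of_abs_hasDerivAt_le {f g f' g' : ℝ → ℝ} {a b : ℝ}
    (hf : ContinuousOn f (Icc a b)) (hg : ContinuousOn g (Icc a b))
    (hf' : ∀ t ∈ Ioo a b, HasDerivAt f (f' t) t) (hg' : ∀ t ∈ Ioo a b, HasDerivAt g (g' t) t)
    (hbound : ∀ t ∈ Ioo a b, |f' t| ≤ g' t) {s t : ℝ} (hs : s ∈ Icc a b) (ht : t ∈ Icc a b)
    (hst : s ≤ t) : |f t - f s| ≤ g t - g s := by
  have hsub : MonotoneOn (g - f) (Icc a b) :=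
    monotoneOn_of_hasDerivWithinAt_nonneg (convex_Icc a b) (hg.sub hf)
      (fun x hx ↦ by
        rw [interior_Icc] at hx ⊢
        exact ((hg' x hx).sub (hf' x hx)).hasDerivWithinAt)
      (fun x hx ↦ by
        rw [interior_Icc] at hx
        linarith [(abs_le.1 (hbound x hx)).2])
  have hadd : MonotoneOn (g + f) (Icc a b) :=
    monotoneOn_of_hasDerivWithinAt_nonneg (convex_Icc a b) (hg.add hf)
      (fun x hx ↦ by
        rw [interior_Icc] at hx ⊢
        exact ((hg' x hx).add (hf' x hx)).hasDerivWithinAt)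
      (fun x hx ↦ by
        rw [interior_Icc] at hx
        linarith [(abs_le.1 (hbound x hx)).1])
  have h₁ := hsub hs ht hst
  have h₂ := hadd hs ht hst
  simp only [Pi.sub_apply, Pi.add_apply] at h₁ h₂
  rw [abs_sub_le_iff]
  constructor <;> linarith

lemma rpow_sub_rpow_le_rpow_sub {x y β : ℝ} (hy : 0 ≤ y) (hyx : y ≤ x) (hβ₀ : 0 ≤ β)
    (hβ₁ : β ≤ 1) : x ^ β - y ^ β ≤ (x - y) ^ β := by
  have := rpow_add_le_add_rpow hy (sub_nonneg.2 hyx) hβ₀ hβ₁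
  rw [add_sub_cancel] at this
  linarith

lemma abs_sub_le_mul_rpow_of_abs_deriv_le {f : ℝ → ℝ} {a b K β : ℝ} (hK : 0 ≤ K)
    (hβ₀ : 0 < β) (hβ₁ : β ≤ 1) (hf : ContinuousOn f (Icc a b))
    (hdiff : ∀ t ∈ Ioo a b, DifferentiableAt ℝ f t)
    (hbound : ∀ t ∈ Ioo a b, |deriv f t| ≤ K * (b - t) ^ (β - 1))
    {s t : ℝ} (hs : s ∈ Icc a b) (ht : t ∈ Icc a b) : |f t - f s| ≤ K / β * |t - s| ^ β := by
  wlog hst : s ≤ t generalizing s t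
  · rw [abs_sub_comm, abs_sub_comm t]
    exact this ht hs (le_of_not_ge hst)
  set g : ℝ → ℝ := fun t ↦ -(K / β) * (b - t) ^ β
  have hg : ContinuousOn g (Icc a b) :=
    continuousOn_const.mul <| (continuousOn_const.sub continuousOn_id).rpow_const
      fun _ _ ↦ Or.inr hβ₀.le
  have hg' : ∀ x ∈ Ioo a b, HasDerivAt g (K * (b - x) ^ (β - 1)) x := fun x hx ↦ by
    have := (((hasDerivAt_id' x).const_sub b).rpow_const
      (p := β) (Or.inl (sub_pos.2 hx.2).ne')).const_mul (-(K / β))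
    exact this.congr_deriv (by field_simp)
  calc |f t - f s| ≤ g t - g s :=
        abs_sub_le_sub_of_abs_hasDerivAt_le hf hg (fun x hx ↦ (hdiff x hx).hasDerivAt) hg'
          hbound hs ht hst
    _ = K / β * ((b - s) ^ β - (b - t) ^ β) := by ring
    _ ≤ K / β * (b - s - (b - t)) ^ β := by
        gcongr
        exact rpow_sub_rpow_le_rpow_sub (sub_nonneg.2 ht.2) (by linarith) hβ₀.le hβ₁
    _ = K / β * |t - s| ^ β := by rw [abs_of_nonneg (sub_nonneg.2 hst)]; ring_nf

lemma rpow_neg_le_of_mul_rpow_le {a c d x β : ℝ} (ha : 0 ≤ a) (hc : 0 < c) (hd : 0 < d)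
    (hx : c * d ^ β ≤ x) : x ^ (-a) ≤ c ^ (-a) * d ^ (-(a * β)) := by
  calc x ^ (-a) ≤ (c * d ^ β) ^ (-a) := rpow_le_rpow_of_nonpos (by positivity) hx (by linarith)
    _ = c ^ (-a) * d ^ (-(a * β)) := by
        rw [mul_rpow hc.le (by positivity), ← rpow_mul hd.le]
        ring_nf

lemma one_le_rpow_mul_rpow_neg {d τ α : ℝ} (hd : 0 < d) (hdτ : d ≤ τ) (hα : 0 ≤ α) :
    1 ≤ τ ^ α * d ^ (-α) := by
  rw [rpow_neg hd.le, ← div_eq_mul_inv, one_le_div (by positivity)]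
  exact rpow_le_rpow hd.le hdτ hα

lemma abs_le_of_gap_bounds {a β c C d τ x s₁ s₂ y : ℝ} (ha : 0 ≤ a) (hβ : 0 ≤ β) (hc : 0 < c)
    (hC : 0 ≤ C) (hd : 0 < d) (hdτ : d ≤ τ)
    (hx : c * d ^ β ≤ x) (hs₁ : c * d ^ β ≤ s₁) (hs₂ : c * d ^ β ≤ s₂)
    (hlo : -2 * x ^ (-a) - C ≤ y)
    (hhi : y ≤ -2 * x ^ (-a) + 2 * s₁ ^ (-a) + 2 * s₂ ^ (-a) + C) :
    |y| ≤ (4 * c ^ (-a) + C * τ ^ (a * β)) * d ^ (-(a * β)) := by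
  have hx₀ : 0 ≤ x ^ (-a) := rpow_nonneg ((by positivity : 0 ≤ c * d ^ β).trans hx) _
  have hx' := rpow_neg_le_of_mul_rpow_le ha hc hd hx
  have hs₁' := rpow_neg_le_of_mul_rpow_le ha hc hd hs₁
  have hs₂' := rpow_neg_le_of_mul_rpow_le ha hc hd hs₂
  have hC' : C ≤ C * τ ^ (a * β) * d ^ (-(a * β)) := by
    rw [mul_assoc]
    exact le_mul_of_one_le_right hC (one_le_rpow_mul_rpow_neg hd hdτ (by positivity))
  rw [abs_le]
  constructor <;> linarith

theorem stmt16_general (a τ c C : ℝ) (ha : 0 < a) (hc : 0 < c) (hC : 0 < C) (hτ : 0 < τ)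
    (r s₁ s₂ : ℝ → ℝ)
    (hcont : ContinuousOn r (Set.Icc 0 τ))
    (hdiff : ∀ t ∈ Set.Ioo (0:ℝ) τ, DifferentiableAt ℝ r t)
    (hrlb : ∀ t ∈ Set.Ioo (0:ℝ) τ, r t ≥ c * (τ - t) ^ ((1:ℝ)/(1+a)))
    (hs₁ : ∀ t ∈ Set.Ioo (0:ℝ) τ, s₁ t ≥ c * (τ - t) ^ ((1:ℝ)/(1+a)))
    (hs₂ : ∀ t ∈ Set.Ioo (0:ℝ) τ, s₂ t ≥ c * (τ - t) ^ ((1:ℝ)/(1+a)))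
    (hdlb : ∀ t ∈ Set.Ioo (0:ℝ) τ, deriv r t ≥ -2 * r t ^ (-a) - C)
    (hdub : ∀ t ∈ Set.Ioo (0:ℝ) τ,
      deriv r t ≤ -2 * r t ^ (-a) + 2 * s₁ t ^ (-a) + 2 * s₂ t ^ (-a) + C) :
    ∃ C' > 0,
      (∀ t ∈ Set.Ioo (0:ℝ) τ, |deriv r t| ≤ C' * (τ - t) ^ (-(a/(1+a)))) ∧
      (∀ s ∈ Set.Icc (0:ℝ) τ, ∀ t ∈ Set.Icc (0:ℝ) τ,
        |r t - r s| ≤ C' * |t - s| ^ ((1:ℝ)/(1+a))) := by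
  have h1a : 0 < 1 + a := by linarith
  set β : ℝ := 1 / (1 + a)
  have hβ₀ : 0 < β := by positivity
  have hβ₁ : β ≤ 1 := (div_le_one h1a).2 (by linarith)
  have hαβ : a * β = a / (1 + a) := mul_one_div a (1 + a)
  have hβ_sub_one : β - 1 = -(a / (1 + a)) := by simp only [β]; field_simp; ring
  set K := 4 * c ^ (-a) + C * τ ^ (a * β)
  have hK : 0 < K := by positivity
  have hder : ∀ t ∈ Ioo (0:ℝ) τ, |deriv r t| ≤ K * (τ - t) ^ (-(a / (1 + a))) := fun t ht ↦ by
    rw [← hαβ]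
    exact abs_le_of_gap_bounds (τ := τ) ha.le hβ₀.le hc hC.le (sub_pos.2 ht.2)
      (by linarith [ht.1]) (hrlb t ht) (hs₁ t ht) (hs₂ t ht) (hdlb t ht) (hdub t ht)
  refine ⟨K / β, by positivity, fun t ht ↦ ?_, fun s hs t ht ↦ ?_⟩
  · exact (hder t ht).trans <| mul_le_mul_of_nonneg_right (le_div_self hK.le hβ₀ hβ₁)
      (rpow_nonneg (sub_pos.2 ht.2).le _)
  · refine abs_sub_le_mul_rpow_of_abs_deriv_le hK.le hβ₀ hβ₁ hcont hdiff (fun t ht ↦ ?_) hs ht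
    rw [hβ_sub_one]
    exact hder t ht

theorem stmt16 (a τ c C : ℝ) (ha : 0 < a) (hc : 0 < c) (hC : 0 < C) (hτ : 0 < τ)
    (r s₁ s₂ : ℝ → ℝ)
    (hpos : ∀ t ∈ Set.Ico (0:ℝ) τ, 0 < r t) (hend : 0 ≤ r τ)
    (hcont : ContinuousOn r (Set.Icc 0 τ))
    (hdiff : ∀ t ∈ Set.Ioo (0:ℝ) τ, DifferentiableAt ℝ r t)
    (hrlb : ∀ t ∈ Set.Ioo (0:ℝ) τ, r t ≥ c * (τ - t) ^ ((1:ℝ)/(1+a)))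
    (hs₁ : ∀ t ∈ Set.Ioo (0:ℝ) τ, s₁ t ≥ c * (τ - t) ^ ((1:ℝ)/(1+a)))
    (hs₂ : ∀ t ∈ Set.Ioo (0:ℝ) τ, s₂ t ≥ c * (τ - t) ^ ((1:ℝ)/(1+a)))
    (hdlb : ∀ t ∈ Set.Ioo (0:ℝ) τ, deriv r t ≥ -2 * r t ^ (-a) - C)
    (hdub : ∀ t ∈ Set.Ioo (0:ℝ) τ,
      deriv r t ≤ -2 * r t ^ (-a) + 2 * s₁ t ^ (-a) + 2 * s₂ t ^ (-a) + C) :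
    ∃ C' > 0,
      (∀ t ∈ Set.Ioo (0:ℝ) τ, |deriv r t| ≤ C' * (τ - t) ^ (-(a/(1+a)))) ∧
      (∀ s ∈ Set.Icc (0:ℝ) τ, ∀ t ∈ Set.Icc (0:ℝ) τ,
        |r t - r s| ≤ C' * |t - s| ^ ((1:ℝ)/(1+a))) :=
  stmt16_general a τ c C ha hc hC hτ r s₁ s₂ hcont hdiff hrlb hs₁ hs₂ hdlb hdub
end
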